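/- arXiv:2406.16268 — 2 statements merged into one kernel-verified Lean document; each statement's English description precedes it below -/
import Mathlib

section
/- If C is a k-plex with |C| ≥ 2k - 1 vertices, then C is connected and has diameter at most 2; in particular, any two distinct non-adjacent vertices of C have a common neighbor in C. -/
open scoped Classical
open Finset

/-- A `k`-plex: every vertex of `C` has at least `|C| - k` neighbors inside `C`. -/
def IsKPlex {V : Type*} (G : SimpleGraph V) (k : ℕ) (C : Finset V) : Prop :=
  ∀ v ∈ C, C.card ≤ (C.filter (fun w => G.Adj v w)).card + k

/-
Two distinct non-adjacent vertices `u, v` of a `k`-plex `C` each have at least `|C| - k`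
neighbours in `C \ {u, v}`, a set of size `|C| - 2`. When `2k ≤ |C| + 1` these two
neighbourhoods cannot be disjoint, so `u` and `v` have a common neighbour. Hence every two
vertices of the induced graph are joined by a walk of length at most `2`.
-/

namespace SimpleGraph

variable {V : Type*}

theorem exists_common_adj_of_card_lt (G : SimpleGraph V) {C : Finset V} {u v : V}
    (hu : u ∈ C) (hv : v ∈ C) (huv : u ≠ v) (hadj : ¬G.Adj u v)
    (hlarge : C.card < (C.filter (G.Adj u)).card + (C.filter (G.Adj v)).card + 2) :
    ∃ w ∈ C, G.Adj u w ∧ G.Adj v w := by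
  by_contra! hcommon
  have hdisj : Disjoint (C.filter (G.Adj u)) (C.filter (G.Adj v)) :=
    disjoint_filter.2 fun w hw hwu hwv => hcommon w hw hwu hwv
  have hsub : C.filter (G.Adj u) ∪ C.filter (G.Adj v) ⊆ (C.erase u).erase v := by
    intro w hw
    simp only [mem_union, mem_filter] at hw
    rcases hw with ⟨hw, hwu⟩ | ⟨hw, hwv⟩
    · exact mem_erase.2 ⟨by rintro rfl; exact hadj hwu, mem_erase.2 ⟨hwu.ne', hw⟩⟩
    · exact mem_erase.2 ⟨hwv.ne', mem_erase.2 ⟨by rintro rfl; exact hadj hwv.symm, hw⟩⟩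
  have hle := card_le_card hsub
  have htwo : 1 < C.card := one_lt_card.2 ⟨u, hu, v, hv, huv⟩
  rw [card_union_of_disjoint hdisj, card_erase_of_mem (mem_erase.2 ⟨huv.symm, hv⟩),
    card_erase_of_mem hu] at hle
  omega

variable {W : Type*} {H : SimpleGraph W}

theorem exists_walk_length_le_two_of_common_adj
    (hH : ∀ u v, u ≠ v → ¬H.Adj u v → ∃ w, H.Adj u w ∧ H.Adj w v) (u v : W) :
    ∃ p : H.Walk u v, p.length ≤ 2 := by
  by_cases heq : u = v
  · subst heq
    exact ⟨.nil, by simp⟩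
  by_cases hadj : H.Adj u v
  · exact ⟨hadj.toWalk, by simp⟩
  obtain ⟨w, huw, hwv⟩ := hH u v heq hadj
  exact ⟨.cons huw hwv.toWalk, by simp⟩

theorem dist_le_two_of_common_adj
    (hH : ∀ u v, u ≠ v → ¬H.Adj u v → ∃ w, H.Adj u w ∧ H.Adj w v) (u v : W) :
    H.dist u v ≤ 2 :=
  let ⟨p, hp⟩ := exists_walk_length_le_two_of_common_adj hH u v
  (dist_le p).trans hp

theorem connected_of_common_adj [Nonempty W]
    (hH : ∀ u v, u ≠ v → ¬H.Adj u v → ∃ w, H.Adj u w ∧ H.Adj w v) : H.Connected :=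
  ⟨fun u v => let ⟨p, _⟩ := exists_walk_length_le_two_of_common_adj hH u v; ⟨p⟩⟩

theorem induce_common_adj_of_common_adj (G : SimpleGraph V) {C : Finset V}
    (hC : ∀ u ∈ C, ∀ v ∈ C, u ≠ v → ¬G.Adj u v → ∃ w ∈ C, G.Adj u w ∧ G.Adj v w)
    (u v : (C : Set V)) (huv : u ≠ v) (hadj : ¬(G.induce (C : Set V)).Adj u v) :
    ∃ w, (G.induce (C : Set V)).Adj u w ∧ (G.induce (C : Set V)).Adj w v :=
  let ⟨w, hw, huw, hvw⟩ := hC u u.2 v v.2 (Subtype.coe_ne_coe.2 huv) hadj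
  ⟨⟨w, hw⟩, huw, hvw.symm⟩

end SimpleGraph

theorem IsKPlex.exists_common_adj {V : Type*} {G : SimpleGraph V} {k : ℕ} {C : Finset V}
    (h : IsKPlex G k C) (hcard : 2 * k ≤ C.card + 1) :
    ∀ u ∈ C, ∀ v ∈ C, u ≠ v → ¬G.Adj u v → ∃ w ∈ C, G.Adj u w ∧ G.Adj v w := by
  intro u hu v hv huv hadj
  refine G.exists_common_adj_of_card_lt hu hv huv hadj ?_
  have hu' : C.card ≤ (C.filter (G.Adj u)).card + k := h u hu
  have hv' : C.card ≤ (C.filter (G.Adj v)).card + k := h v hv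
  omega

/-- A `k`-plex with at least `2k - 1` vertices is connected and has diameter at most `2`;
in particular any two distinct non-adjacent vertices have a common neighbor in `C`. -/
theorem kplex_bounded_diameter {V : Type*} (G : SimpleGraph V) (k : ℕ) (C : Finset V)
    (hk : 1 ≤ k) (h : IsKPlex G k C) (hcard : 2 * k ≤ C.card + 1) :
    (G.induce (C : Set V)).Connected ∧
    (∀ u v : (C : Set V), (G.induce (C : Set V)).dist u v ≤ 2) ∧
    (∀ u ∈ C, ∀ v ∈ C, u ≠ v → ¬ G.Adj u v → ∃ w ∈ C, G.Adj u w ∧ G.Adj v w) := by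
  have hcommon := h.exists_common_adj hcard
  have hinduce := G.induce_common_adj_of_common_adj hcommon
  have : Nonempty (C : Set V) := by
    obtain ⟨x, hx⟩ := card_pos.1 (by omega : 0 < C.card)
    exact ⟨⟨x, hx⟩⟩
  exact ⟨SimpleGraph.connected_of_common_adj hinduce,
    SimpleGraph.dist_le_two_of_common_adj hinduce, hcommon⟩
end

section
/- Let C be a k-plex with |C| ≥ 2k - 1 and let u, v be two distinct vertices of C. Then u and v have a common neighbor in C or are adjacent. More precisely, if u and v are not adjacent, then |N(u) ∩ N(v) ∩ C| ≥ |C| - 2k + 2 > 0. -/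
open scoped Classical
open Finset

namespace SimpleGraph

variable {V : Type*} (G : SimpleGraph V) (C : Finset V) {u v : V}

theorem filter_adj_union_filter_adj_subset (hadj : ¬ G.Adj u v) :
    C.filter (fun w => G.Adj u w) ∪ C.filter (fun w => G.Adj v w) ⊆ (C.erase u).erase v := by
  intro w hw
  simp only [mem_union, mem_filter] at hw
  simp only [mem_erase]
  rcases hw with ⟨hwC, huw⟩ | ⟨hwC, hvw⟩
  · exact ⟨fun hwv => hadj (hwv ▸ huw), huw.ne.symm, hwC⟩
  · exact ⟨hvw.ne.symm, fun hwu => hadj (hwu ▸ hvw).symm, hwC⟩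

/-- Inclusion–exclusion for the two neighbourhoods, which both avoid `u` and `v`. -/
theorem card_filter_adj_add_card_filter_adj_le (hu : u ∈ C) (hv : v ∈ C) (huv : u ≠ v)
    (hadj : ¬ G.Adj u v) :
    (C.filter (fun w => G.Adj u w)).card + (C.filter (fun w => G.Adj v w)).card + 2 ≤
      (C.filter (fun w => G.Adj u w ∧ G.Adj v w)).card + C.card := by
  have hunion : (C.filter (fun w => G.Adj u w) ∪ C.filter (fun w => G.Adj v w)).card + 2 ≤
      C.card := by
    have := card_le_card (G.filter_adj_union_filter_adj_subset C hadj)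
    rw [card_erase_of_mem (mem_erase.mpr ⟨huv.symm, hv⟩), card_erase_of_mem hu] at this
    have : 2 ≤ C.card := one_lt_card.mpr ⟨u, hu, v, hv, huv⟩
    omega
  rw [← card_union_add_card_inter, ← filter_and]
  omega

end SimpleGraph

/-- In a `k`-plex with `|C| ≥ 2k - 1`, two distinct non-adjacent vertices have at least
`|C| - 2k + 2 > 0` common neighbors inside `C`. -/
theorem kplex_common_neighbor {V : Type*} (G : SimpleGraph V) (k : ℕ) (C : Finset V)
    (h : IsKPlex G k C) (hcard : 2 * k ≤ C.card + 1)
    (u v : V) (hu : u ∈ C) (hv : v ∈ C) (huv : u ≠ v) (hadj : ¬ G.Adj u v) :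
    C.card + 2 ≤ (C.filter (fun w => G.Adj u w ∧ G.Adj v w)).card + 2 * k ∧
    0 < (C.filter (fun w => G.Adj u w ∧ G.Adj v w)).card := by
  have hdeg_u := h u hu
  have hdeg_v := h v hv
  have := G.card_filter_adj_add_card_filter_adj_le C hu hv huv hadj
  constructor <;> omega
end
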